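/- Let r = [a,b]×[c,d] be an empty rectangle from grid state x to grid state y contained in the square [0,n-1]², and let D(r) be the number of points (x₁,x₂) ∈ x with x₁ ∈ (a,b) and x₂ ∈ [0,c). Then the canonical sign assignment satisfies S(r) = (-1)^{I(x, {(x₁,x₂)∈x : x₂ ≤ d}) + D(r)·(I(x, {(x₁,x₂)∈x : c < x₂ ≤ d}) + 1)}. -/
import Mathlib


/-- A (combinatorial) rectangle on the `n × n` torus: distinct columns `a, b`
(left/right edges) and distinct rows `c, d` (bottom/top edges), understood cyclically. -/
def GRect (n : ℕ) := {q : (ZMod n × ZMod n) × ZMod n × ZMod n // q.1.1 ≠ q.1.2 ∧ q.2.1 ≠ q.2.2}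

namespace GRect
variable {n : ℕ}
def a (r : GRect n) : ZMod n := r.1.1.1
def b (r : GRect n) : ZMod n := r.1.1.2
def c (r : GRect n) : ZMod n := r.1.2.1
def d (r : GRect n) : ZMod n := r.1.2.2
end GRect

instance {n : ℕ} [NeZero n] : Fintype (GRect n) :=
  inferInstanceAs (Fintype {q : (ZMod n × ZMod n) × ZMod n × ZMod n // q.1.1 ≠ q.1.2 ∧ q.2.1 ≠ q.2.2})

instance {n : ℕ} : DecidableEq (GRect n) :=
  inferInstanceAs (DecidableEq {q : (ZMod n × ZMod n) × ZMod n × ZMod n // q.1.1 ≠ q.1.2 ∧ q.2.1 ≠ q.2.2})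

/-- The rectangle `r` connects the grid state `x` to the grid state `y`. -/
def Connects {n : ℕ} (r : GRect n) (x y : Equiv.Perm (ZMod n)) : Prop :=
  x r.a = r.c ∧ x r.b = r.d ∧ y = x * Equiv.swap r.a r.b

/-- The grid point `(i, j)` lies in the interior of the rectangle `r` (cyclically). -/
def InteriorPt {n : ℕ} (r : GRect n) (i j : ZMod n) : Prop :=
  0 < (i - r.a).val ∧ (i - r.a).val < (r.b - r.a).val ∧
  0 < (j - r.c).val ∧ (j - r.c).val < (r.d - r.c).val

/-- The rectangle `r` is empty: no point of the grid state `x` lies in its interior. -/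
def Empt {n : ℕ} (x : Equiv.Perm (ZMod n)) (r : GRect n) : Prop :=
  ∀ i : ZMod n, ¬ InteriorPt r i (x i)

/-- The cell whose lower-left corner is `(i, j)` is contained in the rectangle `r`. -/
def CellIn {n : ℕ} (r : GRect n) (i j : ZMod n) : Prop :=
  (i - r.a).val < (r.b - r.a).val ∧ (j - r.c).val < (r.d - r.c).val

instance {n : ℕ} (r : GRect n) (i j : ZMod n) : Decidable (CellIn r i j) :=
  inferInstanceAs (Decidable (_ ∧ _))

/-- The underlying 2-chain of a rectangle: the multiplicity with which each cell
of the torus appears in it. -/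
def cellsOf {n : ℕ} (r : GRect n) : ZMod n × ZMod n → ℤ :=
  fun q => if CellIn r q.1 q.2 then 1 else 0

/-- An empty rectangle connecting `x` to `y`: `r ∈ Rect°(x,y)`. -/
def EmptyConnects {n : ℕ} (r : GRect n) (x y : Equiv.Perm (ZMod n)) : Prop :=
  Connects r x y ∧ Empt x r

/-- The decompositions of the 2-chain `p` (a domain from `x` to `z`) as a composite
`r₁ ∗ r₂` of two empty rectangles, `r₁ ∈ Rect°(x,y)`, `r₂ ∈ Rect°(y,z)`; a decomposition
records the intermediate generator `y` and the two rectangles. -/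
def Decomps {n : ℕ} (x z : Equiv.Perm (ZMod n)) (p : ZMod n × ZMod n → ℤ) :
    Set (Equiv.Perm (ZMod n) × GRect n × GRect n) :=
  {t | EmptyConnects t.2.1 x t.1 ∧ EmptyConnects t.2.2 t.1 z ∧
       (fun q => cellsOf t.2.1 q + cellsOf t.2.2 q) = p}

/-- `r` is an empty rectangle starting at `x`: `r ∈ Rect°(x, x * swap a b)`. -/
def Hits {n : ℕ} (x : Equiv.Perm (ZMod n)) (r : GRect n) : Prop :=
  x r.a = r.c ∧ x r.b = r.d ∧ Empt x r

instance {n : ℕ} [NeZero n] (x : Equiv.Perm (ZMod n)) (r : GRect n) :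
    Decidable (Hits x r) := by
  unfold Hits Empt InteriorPt; infer_instance

/-- The terminal grid state of a rectangle starting at `x`. -/
def next {n : ℕ} (x : Equiv.Perm (ZMod n)) (r : GRect n) : Equiv.Perm (ZMod n) :=
  x * Equiv.swap r.a r.b

/-- The horizontal annulus of height one through row `c`. -/
def rowAnn (n : ℕ) (c : ZMod n) : ZMod n × ZMod n → ℤ :=
  fun q => if q.2 = c then 1 else 0

/-- The vertical annulus of width one through column `c`. -/
def colAnn (n : ℕ) (c : ZMod n) : ZMod n × ZMod n → ℤ :=
  fun q => if q.1 = c then 1 else 0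

/-- A (true) sign assignment on the empty rectangles of the `n × n` toroidal grid
diagram: a `{±1}`-valued function `S` (on pairs of a grid state `x` and an empty
rectangle starting at `x`) such that
(Sq) for any two distinct decompositions `r₁ ∗ r₂ = r₁' ∗ r₂'` of the same domain into
composable empty rectangles, `S(r₁)S(r₂) = -S(r₁')S(r₂')`;
(V) `S(r₁)S(r₂) = -1` whenever `r₁ ∗ r₂` is a vertical annulus of width one; and
(H) `S(r₁)S(r₂) = +1` whenever `r₁ ∗ r₂` is a horizontal annulus of height one. -/
def IsSignAssign {n : ℕ} (S : Equiv.Perm (ZMod n) → GRect n → ℤˣ) : Prop :=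
  (∀ (x : Equiv.Perm (ZMod n)) (r₁ r₂ r₁' r₂' : GRect n),
    Hits x r₁ → Hits (next x r₁) r₂ → Hits x r₁' → Hits (next x r₁') r₂' →
    (r₁, r₂) ≠ (r₁', r₂') →
    (∀ q, cellsOf r₁ q + cellsOf r₂ q = cellsOf r₁' q + cellsOf r₂' q) →
    next (next x r₁) r₂ = next (next x r₁') r₂' →
    S x r₁ * S (next x r₁) r₂ = - (S x r₁' * S (next x r₁') r₂')) ∧
  (∀ (x : Equiv.Perm (ZMod n)) (r₁ r₂ : GRect n) (c : ZMod n),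
    Hits x r₁ → Hits (next x r₁) r₂ → next (next x r₁) r₂ = x →
    (∀ q, cellsOf r₁ q + cellsOf r₂ q = colAnn n c q) →
    S x r₁ * S (next x r₁) r₂ = -1) ∧
  (∀ (x : Equiv.Perm (ZMod n)) (r₁ r₂ : GRect n) (c : ZMod n),
    Hits x r₁ → Hits (next x r₁) r₂ → next (next x r₁) r₂ = x →
    (∀ q, cellsOf r₁ q + cellsOf r₂ q = rowAnn n c q) →
    S x r₁ * S (next x r₁) r₂ = 1)

/-- `I(x, {(x₁,x₂) ∈ x : x₂ ≤ d})`: the number of pairs of points of the grid state `x`,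
one strictly dominating the other in both coordinates, whose upper point has height
at most `d`. -/
def IleD {n : ℕ} [NeZero n] (x : Equiv.Perm (ZMod n)) (d : ℕ) : ℕ :=
  ((Finset.univ : Finset (ZMod n × ZMod n)).filter
    (fun p => p.1.val < p.2.val ∧ (x p.1).val < (x p.2).val ∧ (x p.2).val ≤ d)).card

/-- `I(x, {(x₁,x₂) ∈ x : c < x₂ ≤ d})`. -/
def IcdD {n : ℕ} [NeZero n] (x : Equiv.Perm (ZMod n)) (c d : ℕ) : ℕ :=
  ((Finset.univ : Finset (ZMod n × ZMod n)).filter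
    (fun p => p.1.val < p.2.val ∧ (x p.1).val < (x p.2).val ∧
      c < (x p.2).val ∧ (x p.2).val ≤ d)).card

/-- `D(r)`: the number of points of `x` lying strictly below the rectangle `r`, i.e.
with first coordinate strictly between the columns of `r` and second coordinate
strictly below its bottom row. -/
def Dcnt {n : ℕ} [NeZero n] (x : Equiv.Perm (ZMod n)) (r : GRect n) : ℕ :=
  (Finset.univ.filter (fun i : ZMod n =>
    r.a.val < i.val ∧ i.val < r.b.val ∧ (x i).val < r.c.val)).card

section Helpers
variable {n : ℕ} [NeZero n]

lemma zval_inj {a b : ZMod n} (h : a.val = b.val) : a = b := ZMod.val_injective n h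

lemma cell_window {a b : ZMod n} (hab : a.val < b.val) (i : ZMod n) :
    (i - a).val < (b - a).val ↔ (a.val ≤ i.val ∧ i.val < b.val) := by
  have hb := ZMod.val_lt b
  have hi := ZMod.val_lt i
  rw [ZMod.val_sub hab.le]
  rcases le_or_gt a.val i.val with hle | hlt
  · rw [ZMod.val_sub hle]; omega
  · have hne : a - i ≠ 0 := by
      rw [sub_ne_zero]; intro h; rw [h] at hlt; omega
    haveI : NeZero (a - i) := ⟨hne⟩
    have h2 : (i - a).val = n - (a.val - i.val) := by
      have h3 : i - a = -(a - i) := by ring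
      rw [h3, ZMod.val_neg_of_ne_zero, ZMod.val_sub hlt.le]
    rw [h2]; omega

lemma window_int {a b : ZMod n} (hab : a.val < b.val) (i : ZMod n) :
    (0 < (i - a).val ∧ (i - a).val < (b - a).val) ↔ (a.val < i.val ∧ i.val < b.val) := by
  rw [and_congr_right_iff.2 (fun _ => cell_window hab i)]
  constructor
  · rintro ⟨h0, hle, hlt⟩
    refine ⟨lt_of_le_of_ne hle fun h => ?_, hlt⟩
    have : i = a := zval_inj h.symm
    subst this; simp at h0
  · rintro ⟨h1, h2⟩
    refine ⟨?_, h1.le, h2⟩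
    have : i - a ≠ 0 := by rw [sub_ne_zero]; intro h; rw [h] at h1; omega
    exact Nat.pos_of_ne_zero (fun hv => this (by
      have : (i-a).val = (0 : ZMod n).val := by simpa using hv
      exact zval_inj this))

lemma cellIn_iff {r : GRect n} (hab : r.a.val < r.b.val) (hcd : r.c.val < r.d.val) (i j : ZMod n) :
    CellIn r i j ↔ ((r.a.val ≤ i.val ∧ i.val < r.b.val) ∧ (r.c.val ≤ j.val ∧ j.val < r.d.val)) := by
  unfold CellIn
  rw [cell_window hab, cell_window hcd]

lemma interiorPt_iff {r : GRect n} (hab : r.a.val < r.b.val) (hcd : r.c.val < r.d.val) (i j : ZMod n) :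
    InteriorPt r i j ↔ ((r.a.val < i.val ∧ i.val < r.b.val) ∧ (r.c.val < j.val ∧ j.val < r.d.val)) := by
  unfold InteriorPt
  rw [← window_int hab, ← window_int hcd]
  tauto

end Helpers


section Counting
variable {n : ℕ} [NeZero n]

open Finset Equiv

lemma swap_val_eq (p q : ZMod n) (i : ZMod n) :
    ((Equiv.swap p q) i).val =
      if i.val = p.val then q.val else if i.val = q.val then p.val else i.val := by
  by_cases h1 : i = p
  · subst h1; rw [Equiv.swap_apply_left, if_pos rfl]
  · by_cases h2 : i = q
    · subst h2
      rw [Equiv.swap_apply_right]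
      by_cases h3 : i.val = p.val
      · rw [if_pos h3, h3]
      · rw [if_neg h3, if_pos rfl]
    · rw [Equiv.swap_apply_of_ne_of_ne h1 h2,
        if_neg (fun h => h1 (zval_inj h)), if_neg (fun h => h2 (zval_inj h))]

/-- Exact effect of an adjacent (in column value) transposition on `IleD`. -/
lemma IleD_swap_adj (x : Equiv.Perm (ZMod n)) (p q : ZMod n) (hpq : q.val = p.val + 1)
    (h : ℕ) :
    IleD (x * Equiv.swap p q) h + (if (x p).val < (x q).val ∧ (x q).val ≤ h then 1 else 0)
      = IleD x h + (if (x q).val < (x p).val ∧ (x p).val ≤ h then 1 else 0) := by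
  classical
  set σ := Equiv.swap p q with hσ
  have hpq' : p ≠ q := fun h => by rw [h] at hpq; omega
  -- Step 1 : reindex
  have step1 : IleD (x * σ) h = (Finset.univ.filter
      (fun t : ZMod n × ZMod n => (σ t.1).val < (σ t.2).val ∧
        (x t.1).val < (x t.2).val ∧ (x t.2).val ≤ h)).card := by
    rw [IleD]
    apply Finset.card_nbij' (fun t => (σ t.1, σ t.2)) (fun t => (σ t.1, σ t.2))
    · intro t ht
      simp only [Finset.mem_filter, Finset.mem_univ, true_and, Equiv.Perm.mul_apply] at ht ⊢
      simpa [hσ, Equiv.swap_apply_self] using ht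
    · intro t ht
      simp only [Finset.mem_filter, Finset.mem_univ, true_and, Equiv.Perm.mul_apply] at ht ⊢
      simpa [hσ, Equiv.swap_apply_self] using ht
    · intro t _; simp [hσ, Equiv.swap_apply_self]
    · intro t _; simp [hσ, Equiv.swap_apply_self]
  -- decomposition of a count into the two special pairs and the rest
  have decomp : ∀ (Q : ZMod n × ZMod n → Prop) (_ : DecidablePred Q),
      (Finset.univ.filter Q).card
        = ((Finset.univ.filter fun t => Q t ∧ ¬(t = (p,q) ∨ t = (q,p))).card)
          + ((if Q (p,q) then 1 else 0) + (if Q (q,p) then 1 else 0)) := by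
    intro Q _
    have h1 : Finset.univ.filter Q =
        (Finset.univ.filter fun t => Q t ∧ ¬(t = (p,q) ∨ t = (q,p)))
          ∪ (({(p,q),(q,p)} : Finset (ZMod n × ZMod n)).filter Q) := by
      ext t
      simp only [Finset.mem_filter, Finset.mem_univ, true_and, Finset.mem_union,
        Finset.mem_insert, Finset.mem_singleton]
      tauto
    have hd : Disjoint (Finset.univ.filter fun t => Q t ∧ ¬(t = (p,q) ∨ t = (q,p)))
        (({(p,q),(q,p)} : Finset (ZMod n × ZMod n)).filter Q) := by
      rw [Finset.disjoint_left]
      intro t ht ht'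
      simp only [Finset.mem_filter, Finset.mem_univ, true_and, Finset.mem_insert,
        Finset.mem_singleton] at ht ht'
      tauto
    have hpair : (({(p,q),(q,p)} : Finset (ZMod n × ZMod n)).filter Q).card
        = (if Q (p,q) then 1 else 0) + (if Q (q,p) then 1 else 0) := by
      rw [Finset.card_filter, Finset.sum_insert (by simp [hpq', Prod.ext_iff]),
        Finset.sum_singleton]
    rw [h1, Finset.card_union_of_disjoint hd, hpair]
  rw [step1, IleD, decomp _ inferInstance, decomp (fun t : ZMod n × ZMod n =>
      t.1.val < t.2.val ∧ (x t.1).val < (x t.2).val ∧ (x t.2).val ≤ h) inferInstance]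
  -- the big parts agree
  have hmain : (Finset.univ.filter fun t : ZMod n × ZMod n =>
        ((σ t.1).val < (σ t.2).val ∧ (x t.1).val < (x t.2).val ∧ (x t.2).val ≤ h)
          ∧ ¬(t = (p,q) ∨ t = (q,p)))
      = (Finset.univ.filter fun t : ZMod n × ZMod n =>
        (t.1.val < t.2.val ∧ (x t.1).val < (x t.2).val ∧ (x t.2).val ≤ h)
          ∧ ¬(t = (p,q) ∨ t = (q,p))) := by
    apply Finset.filter_congr
    intro t _
    have key : ¬(t = (p,q) ∨ t = (q,p)) →
        ((σ t.1).val < (σ t.2).val ↔ t.1.val < t.2.val) := by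
      intro hne
      have hA : ¬(t.1.val = p.val ∧ t.2.val = q.val) := fun hc =>
        hne (Or.inl (Prod.ext (zval_inj hc.1) (zval_inj hc.2)))
      have hB : ¬(t.1.val = q.val ∧ t.2.val = p.val) := fun hc =>
        hne (Or.inr (Prod.ext (zval_inj hc.1) (zval_inj hc.2)))
      simp only [hσ]
      rw [swap_val_eq, swap_val_eq]
      split_ifs <;> omega
    constructor
    · rintro ⟨⟨h1, h2⟩, hne⟩; exact ⟨⟨(key hne).1 h1, h2⟩, hne⟩
    · rintro ⟨⟨h1, h2⟩, hne⟩; exact ⟨⟨(key hne).2 h1, h2⟩, hne⟩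
  rw [hmain]
  -- indicator bookkeeping
  have i1 : (σ p).val = q.val := by rw [hσ, Equiv.swap_apply_left]
  have i2 : (σ q).val = p.val := by rw [hσ, Equiv.swap_apply_right]
  simp only [i1, i2]
  have : ¬ (q.val < p.val) := by omega
  have hqp : p.val < q.val := by omega
  split_ifs <;> omega

/-- Parity form of the adjacent-swap lemma. -/
lemma IleD_swap_adj_mod (x : Equiv.Perm (ZMod n)) (p q : ZMod n) (hpq : q.val = p.val + 1)
    (h : ℕ) :
    IleD (x * Equiv.swap p q) h % 2
      = (IleD x h + if (x p).val ≤ h ∧ (x q).val ≤ h then 1 else 0) % 2 := by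
  have hne : p ≠ q := fun hc => by rw [hc] at hpq; omega
  have hval : (x p).val ≠ (x q).val := fun hc =>
    hne (x.injective (zval_inj hc))
  have := IleD_swap_adj x p q hpq h
  split_ifs at * <;> omega

/-- No-flip form: adjacent swap where not both values are below the threshold. -/
lemma IleD_swap_adj_eq (x : Equiv.Perm (ZMod n)) (p q : ZMod n) (hpq : q.val = p.val + 1)
    (h : ℕ) (hmax : ¬((x p).val ≤ h ∧ (x q).val ≤ h)) :
    IleD (x * Equiv.swap p q) h = IleD x h := by
  have := IleD_swap_adj x p q hpq h
  split_ifs at this <;> omega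

lemma IleD_split (x : Equiv.Perm (ZMod n)) (c d : ℕ) (hcd : c ≤ d) :
    IleD x c + IcdD x c d = IleD x d := by
  classical
  rw [IleD, IleD, IcdD, ← Finset.card_union_of_disjoint (by
    rw [Finset.disjoint_left]
    intro t ht ht'
    simp only [Finset.mem_filter] at ht ht'
    obtain ⟨-, -, -, h1⟩ := ht
    obtain ⟨-, -, -, h2, -⟩ := ht'
    omega)]
  congr 1
  rw [← Finset.filter_or]
  apply Finset.filter_congr
  intro t _
  constructor
  · rintro (⟨h1, h2, h3⟩ | ⟨h1, h2, h3, h4⟩)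
    · exact ⟨h1, h2, le_trans h3 hcd⟩
    · exact ⟨h1, h2, h4⟩
  · rintro ⟨h1, h2, h3⟩
    rcases le_or_gt (x t.2).val c with hc | hc
    · exact Or.inl ⟨h1, h2, hc⟩
    · exact Or.inr ⟨h1, h2, hc, h3⟩

/-- General flip: swapping two columns whose heights are both at most `h`
flips the parity of `IleD`. -/
lemma IleD_swap_flip (k : ℕ) : ∀ (x : Equiv.Perm (ZMod n)) (p q : ZMod n) (h : ℕ),
    q.val - p.val ≤ k → p.val < q.val → (x p).val ≤ h → (x q).val ≤ h →
    IleD (x * Equiv.swap p q) h % 2 = (IleD x h + 1) % 2 := by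
  induction k with
  | zero => intro x p q h hk hlt _ _; omega
  | succ k ih =>
    intro x p q h hk hlt hu hw
    by_cases hadj : q.val = p.val + 1
    · rw [IleD_swap_adj_mod x p q hadj h, if_pos ⟨hu, hw⟩]
    · -- decompose through p+1
      set p1 : ZMod n := p + 1 with hp1def
      have hn2 : 2 ≤ n := by
        have := ZMod.val_lt q; omega
      have h1v : (1 : ZMod n).val = 1 := ZMod.val_one'' (by omega)
      have hp1 : p1.val = p.val + 1 := by
        rw [hp1def, ZMod.val_add_of_lt (by rw [h1v]; have := ZMod.val_lt q; omega), h1v]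
      have hne_pp1 : p ≠ p1 := fun hc => by rw [← hc] at hp1; omega
      have hne_p1q : p1 ≠ q := fun hc => by rw [hc] at hp1; omega
      have hne_pq : p ≠ q := fun hc => by rw [hc] at hlt; omega
      set x1 := x * Equiv.swap p p1 with hx1
      set x2 := x1 * Equiv.swap p1 q with hx2
      have key : Equiv.swap p p1 * Equiv.swap p1 q * Equiv.swap p p1 = Equiv.swap p q := by
        have h0 := Equiv.swap_mul_swap_mul_swap (x := q) (y := p1) (z := p)
          (Ne.symm hne_p1q) (Ne.symm hne_pq)
        rw [Equiv.swap_comm p1 p, Equiv.swap_comm q p1] at h0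
        exact h0
      have hcomp : x2 * Equiv.swap p p1 = x * Equiv.swap p q := by
        rw [hx2, hx1, mul_assoc, mul_assoc,
          ← mul_assoc (Equiv.swap p p1) (Equiv.swap p1 q) (Equiv.swap p p1), key]
      have hx1p1 : x1 p1 = x p := by
        rw [hx1, Equiv.Perm.mul_apply, Equiv.swap_apply_right]
      have hx1q : x1 q = x q := by
        rw [hx1, Equiv.Perm.mul_apply,
          Equiv.swap_apply_of_ne_of_ne (Ne.symm hne_pq) (Ne.symm hne_p1q)]
      have hx2p : x2 p = x p1 := by
        rw [hx2, Equiv.Perm.mul_apply,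
          Equiv.swap_apply_of_ne_of_ne hne_pp1 hne_pq, hx1, Equiv.Perm.mul_apply,
          Equiv.swap_apply_left]
      have hx2p1 : x2 p1 = x q := by
        rw [hx2, Equiv.Perm.mul_apply, Equiv.swap_apply_left, hx1q]
      have s2 : IleD x2 h % 2 = (IleD x1 h + 1) % 2 := by
        apply ih x1 p1 q h (by omega) (by omega)
        · rw [hx1p1]; exact hu
        · rw [hx1q]; exact hw
      have s1 := IleD_swap_adj_mod x p p1 hp1 h
      rw [← hx1] at s1
      have s3 := IleD_swap_adj_mod x2 p p1 hp1 h
      rw [hcomp] at s3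
      rw [hx2p, hx2p1] at s3
      by_cases hm : (x p1).val ≤ h
      · rw [if_pos ⟨hu, hm⟩] at s1
        rw [if_pos ⟨hm, hw⟩] at s3
        omega
      · rw [if_neg (fun hc => hm hc.2)] at s1
        rw [if_neg (fun hc => hm hc.1)] at s3
        omega

end Counting


section MainHelpers
variable {n : ℕ} [NeZero n]

lemma units_pow_parity {k l : ℕ} (h : k % 2 = l % 2) : ((-1 : ℤˣ)) ^ k = (-1) ^ l := by
  conv_lhs => rw [← Nat.div_add_mod k 2]
  conv_rhs => rw [← Nat.div_add_mod l 2]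
  rw [pow_add, pow_add, pow_mul, pow_mul, neg_one_sq, one_pow, one_pow, h]

lemma neg_pow_units (E : ℕ) : -((-1 : ℤˣ) ^ E) = (-1) ^ (E + 1) := by
  rw [pow_succ, mul_neg_one]

lemma swap_sandwich {p p1 q : ZMod n} (h1 : p1 ≠ q) (h2 : p ≠ q) :
    Equiv.swap p p1 * Equiv.swap p1 q * Equiv.swap p p1 = Equiv.swap p q := by
  have h0 := Equiv.swap_mul_swap_mul_swap (x := q) (y := p1) (z := p)
    (Ne.symm h1) (Ne.symm h2)
  rw [Equiv.swap_comm p1 p, Equiv.swap_comm q p1] at h0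
  exact h0

lemma empt_of_thin (hn : 2 ≤ n) (x : Equiv.Perm (ZMod n)) (r : GRect n)
    (hb : r.b = r.a + 1) : Empt x r := by
  intro i hi
  obtain ⟨h1, h2, -⟩ := hi
  rw [hb] at h2
  have h3 : (r.a + 1 - r.a) = (1 : ZMod n) := by ring
  rw [h3, ZMod.val_one'' (by omega)] at h2
  omega

end MainHelpers


/-- The canonical sign assignment (the one agreeing on thin rectangles contained in the
square `Σ = [0,n-1] × [0,n-1]` with `S₀(r) = (-1)^{I(x,{(x₁,x₂) ∈ x : x₂ ≤ h(r)})}`)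
satisfies, for every empty rectangle `r = [a,b] × [c,d] ∈ Rect°(x,y)` contained in `Σ`,
`S(r) = (-1)^{I(x,{x₂ ≤ d}) + D(r)·(I(x,{c < x₂ ≤ d}) + 1)}`. -/
theorem signAssign_square_formula (n : ℕ) [NeZero n] (hn : 2 ≤ n)
    (S : Equiv.Perm (ZMod n) → GRect n → ℤˣ)
    (hS : IsSignAssign S)
    (hthin : ∀ (x : Equiv.Perm (ZMod n)) (r : GRect n), Hits x r →
      r.b.val = r.a.val + 1 → r.b.val ≤ n - 1 →
      r.c.val < r.d.val → r.d.val ≤ n - 1 →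
      S x r = (-1) ^ IleD x r.d.val) :
    ∀ (x : Equiv.Perm (ZMod n)) (r : GRect n), Hits x r →
      r.a.val < r.b.val → r.b.val ≤ n - 1 →
      r.c.val < r.d.val → r.d.val ≤ n - 1 →
      S x r = (-1) ^ (IleD x r.d.val + Dcnt x r * (IcdD x r.c.val r.d.val + 1)) := by
  classical
  obtain ⟨hSq, -, -⟩ := hS
  suffices key : ∀ (k : ℕ) (x : Equiv.Perm (ZMod n)) (r : GRect n), r.b.val - r.a.val ≤ k →
      Hits x r → r.a.val < r.b.val → r.c.val < r.d.val →
      S x r = (-1) ^ (IleD x r.d.val + Dcnt x r * (IcdD x r.c.val r.d.val + 1)) by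
    intro x r h1 h2 _ h4 _
    exact key (r.b.val - r.a.val) x r le_rfl h1 h2 h4
  intro k
  induction k with
  | zero => intro x r hk _ hab _; omega
  | succ k ih =>
    intro x r hk hHit hab hcd
    obtain ⟨hxa, hxb, hE⟩ := hHit
    have hBlt := ZMod.val_lt r.b
    have hDlt := ZMod.val_lt r.d
    by_cases hthinw : r.b.val = r.a.val + 1
    · -- thin base case
      have hD0 : Dcnt x r = 0 := by
        rw [Dcnt, Finset.card_eq_zero, Finset.filter_eq_empty_iff]
        intro i _
        rintro ⟨h1, h2, -⟩
        omega
      rw [hD0, Nat.zero_mul, Nat.add_zero]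
      exact hthin x r ⟨hxa, hxb, hE⟩ hthinw (by omega) hcd (by omega)
    · -- width at least 2
      have hwA : r.a.val + 1 < r.b.val := by omega
      have hn2 : 2 ≤ n := by omega
      have h1v : (1 : ZMod n).val = 1 := ZMod.val_one'' (by omega)
      set A1 : ZMod n := r.a + 1 with hA1def
      have hA1 : A1.val = r.a.val + 1 := by
        rw [hA1def, ZMod.val_add_of_lt (by rw [h1v]; omega), h1v]
      have hAA1 : r.a ≠ A1 := fun h => by
        have := congrArg ZMod.val h; omega
      have hA1B : A1 ≠ r.b := fun h => by
        have := congrArg ZMod.val h; omega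
      have hAB : r.a ≠ r.b := r.2.1
      have hCD : r.c ≠ r.d := r.2.2
      set e : ZMod n := x A1 with hedef
      have heC : e ≠ r.c := by
        rw [hedef, ← hxa]; exact fun h => hAA1 (x.injective h).symm
      have heD : e ≠ r.d := by
        rw [hedef, ← hxb]; exact fun h => hA1B (x.injective h)
      have hecases : e.val < r.c.val ∨ r.d.val < e.val := by
        have h1 : e.val ≠ r.c.val := fun h => heC (zval_inj h)
        have h2 : e.val ≠ r.d.val := fun h => heD (zval_inj h)
        by_contra hcon
        push_neg at hcon
        exact hE A1 ((interiorPt_iff hab hcd A1 (x A1)).2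
          ⟨⟨by omega, by omega⟩, by rw [← hedef]; omega⟩)
      set y' : Equiv.Perm (ZMod n) := x * Equiv.swap r.a A1 with hy'def
      have hy'A : y' r.a = e := by
        rw [hy'def, Equiv.Perm.mul_apply, Equiv.swap_apply_left]
      have hy'A1 : y' A1 = r.c := by
        rw [hy'def, Equiv.Perm.mul_apply, Equiv.swap_apply_right, hxa]
      have hy'i : ∀ i : ZMod n, i ≠ r.a → i ≠ A1 → y' i = x i := by
        intro i h1 h2
        rw [hy'def, Equiv.Perm.mul_apply, Equiv.swap_apply_of_ne_of_ne h1 h2]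
      have hy'B : y' r.b = r.d := by
        rw [hy'i r.b (Ne.symm hAB) (Ne.symm hA1B), hxb]
      set r3 : GRect n := ⟨((A1, r.b), (r.c, r.d)), ⟨hA1B, hCD⟩⟩ with hr3def
      have p3a : r3.a = A1 := rfl
      have p3b : r3.b = r.b := rfl
      have p3c : r3.c = r.c := rfl
      have p3d : r3.d = r.d := rfl
      have hab3 : r3.a.val < r3.b.val := by rw [p3a, p3b]; omega
      have hcd3 : r3.c.val < r3.d.val := by rw [p3c, p3d]; exact hcd
      have hEmpt3 : Empt y' r3 := by
        intro i hi
        rw [interiorPt_iff hab3 hcd3, p3a, p3b, p3c, p3d] at hi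
        obtain ⟨⟨hi1, hi2⟩, hi3⟩ := hi
        have h1 : i ≠ r.a := fun h => by have := congrArg ZMod.val h; omega
        have h2 : i ≠ A1 := fun h => by have := congrArg ZMod.val h; omega
        rw [hy'i i h1 h2] at hi3
        exact hE i ((interiorPt_iff hab hcd i (x i)).2 ⟨⟨by omega, hi2⟩, hi3⟩)
      have hHit3 : Hits y' r3 := ⟨hy'A1, hy'B, hEmpt3⟩
      have hIH3 : S y' r3 =
          (-1) ^ (IleD y' r.d.val + Dcnt y' r3 * (IcdD y' r.c.val r.d.val + 1)) :=
        ih y' r3 (by rw [p3a, p3b]; omega) hHit3 hab3 hcd3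
      have hm := IleD_split x r.c.val r.d.val hcd.le
      have hm' := IleD_split y' r.c.val r.d.val hcd.le
      rcases hecases with heB | heA
      · -- CASE B : the point in column a+1 is below the rectangle
        set rp : GRect n := ⟨((r.a, A1), (e, r.c)), ⟨hAA1, heC⟩⟩ with hrpdef
        set rt : GRect n := ⟨((r.a, A1), (e, r.d)), ⟨hAA1, heD⟩⟩ with hrtdef
        have hHitp : Hits y' rp := ⟨hy'A, hy'A1, empt_of_thin hn2 y' rp hA1def⟩
        have hnextp : next y' rp = x := by
          show y' * Equiv.swap r.a A1 = x
          rw [hy'def, mul_assoc, Equiv.swap_mul_self, mul_one]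
        have hHitr : Hits (next y' rp) r := by
          rw [hnextp]; exact ⟨hxa, hxb, hE⟩
        set v : Equiv.Perm (ZMod n) := y' * Equiv.swap A1 r.b with hvdef
        have hnext3 : next y' r3 = v := rfl
        have hvA : v r.a = e := by
          rw [hvdef, Equiv.Perm.mul_apply, Equiv.swap_apply_of_ne_of_ne hAA1 hAB, hy'A]
        have hvA1 : v A1 = r.d := by
          rw [hvdef, Equiv.Perm.mul_apply, Equiv.swap_apply_left, hy'B]
        have hHitt : Hits (next y' r3) rt := by
          rw [hnext3]
          exact ⟨hvA, hvA1, empt_of_thin hn2 v rt hA1def⟩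
        have hne : (rp, r) ≠ (r3, rt) := fun h => by
          have h1 := congrArg (fun t : GRect n × GRect n => t.1.b.val) h
          have h1' : A1.val = r.b.val := h1
          omega
        have hcells : ∀ t : ZMod n × ZMod n,
            cellsOf rp t + cellsOf r t = cellsOf r3 t + cellsOf rt t := by
          intro t
          have c0 := cellIn_iff hab hcd t.1 t.2
          have c1 : CellIn rp t.1 t.2 ↔ ((r.a.val ≤ t.1.val ∧ t.1.val < A1.val) ∧
              (e.val ≤ t.2.val ∧ t.2.val < r.c.val)) :=
            cellIn_iff (by show r.a.val < A1.val; omega)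
              (by show e.val < r.c.val; omega) t.1 t.2
          have c2 : CellIn r3 t.1 t.2 ↔ ((A1.val ≤ t.1.val ∧ t.1.val < r.b.val) ∧
              (r.c.val ≤ t.2.val ∧ t.2.val < r.d.val)) :=
            cellIn_iff hab3 hcd3 t.1 t.2
          have c3 : CellIn rt t.1 t.2 ↔ ((r.a.val ≤ t.1.val ∧ t.1.val < A1.val) ∧
              (e.val ≤ t.2.val ∧ t.2.val < r.d.val)) :=
            cellIn_iff (by show r.a.val < A1.val; omega)
              (by show e.val < r.d.val; omega) t.1 t.2
          simp only [cellsOf, c0, c1, c2, c3]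
          split_ifs <;> omega
        have hfinal : next (next y' rp) r = next (next y' r3) rt := by
          rw [hnextp, hnext3]
          show x * Equiv.swap r.a r.b = v * Equiv.swap r.a A1
          rw [hvdef, hy'def, mul_assoc, mul_assoc,
            ← mul_assoc (Equiv.swap r.a A1) (Equiv.swap A1 r.b) (Equiv.swap r.a A1),
            swap_sandwich hA1B hAB]
        have hsq := hSq y' rp r r3 rt hHitp hHitr hHit3 hHitt hne hcells hfinal
        rw [hnextp, hnext3] at hsq
        have hsolve : S x r = S y' rp * -(S y' r3 * S v rt) := by
          rw [← hsq, ← mul_assoc, Int.units_mul_self, one_mul]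
        have hSp : S y' rp = (-1) ^ IleD y' r.c.val :=
          hthin y' rp hHitp (by show A1.val = r.a.val + 1; omega)
            (by show A1.val ≤ n - 1; omega) (by show e.val < r.c.val; omega)
            (by show r.c.val ≤ n - 1; omega)
        have hSt : S v rt = (-1) ^ IleD v r.d.val := by
          have h' : Hits v rt := by rw [← hnext3]; exact hHitt
          exact hthin v rt h' (by show A1.val = r.a.val + 1; omega)
            (by show A1.val ≤ n - 1; omega) (by show e.val < r.d.val; omega)
            (by show r.d.val ≤ n - 1; omega)
        have hyc : IleD y' r.c.val % 2 = (IleD x r.c.val + 1) % 2 :=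
          IleD_swap_flip (A1.val - r.a.val) x r.a A1 r.c.val le_rfl (by omega)
            (by rw [hxa]) (by rw [← hedef]; omega)
        have hyd : IleD y' r.d.val % 2 = (IleD x r.d.val + 1) % 2 :=
          IleD_swap_flip (A1.val - r.a.val) x r.a A1 r.d.val le_rfl (by omega)
            (by rw [hxa]; omega) (by rw [← hedef]; omega)
        have hvd : IleD v r.d.val % 2 = (IleD y' r.d.val + 1) % 2 :=
          IleD_swap_flip (r.b.val - A1.val) y' A1 r.b r.d.val le_rfl (by omega)
            (by rw [hy'A1]; omega) (by rw [hy'B])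
        have hDB : Dcnt x r = Dcnt y' r3 + 1 := by
          rw [Dcnt, Dcnt]
          have hset : Finset.univ.filter (fun i : ZMod n =>
              r.a.val < i.val ∧ i.val < r.b.val ∧ (x i).val < r.c.val)
            = insert A1 (Finset.univ.filter (fun i : ZMod n =>
              r3.a.val < i.val ∧ i.val < r3.b.val ∧ (y' i).val < r3.c.val)) := by
            ext i
            simp only [Finset.mem_filter, Finset.mem_univ, true_and, Finset.mem_insert,
              p3a, p3b, p3c]
            constructor
            · rintro ⟨h1, h2, h3⟩
              by_cases hiA1 : i = A1
              · exact Or.inl hiA1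
              · right
                have hvA1i : i.val ≠ A1.val := fun h => hiA1 (zval_inj h)
                have hiA : i ≠ r.a := fun h => by have := congrArg ZMod.val h; omega
                rw [hy'i i hiA hiA1]
                exact ⟨by omega, h2, h3⟩
            · rintro (rfl | ⟨h1, h2, h3⟩)
              · exact ⟨by omega, by omega, by rw [← hedef]; omega⟩
              · have hiA : i ≠ r.a := fun h => by have := congrArg ZMod.val h; omega
                have hiA1 : i ≠ A1 := fun h => by have := congrArg ZMod.val h; omega
                rw [hy'i i hiA hiA1] at h3
                exact ⟨by omega, h2, h3⟩
          rw [hset, Finset.card_insert_of_notMem (by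
            simp only [Finset.mem_filter, Finset.mem_univ, true_and, p3a, p3b, p3c]
            omega)]
        have hmm' : IcdD y' r.c.val r.d.val % 2 = IcdD x r.c.val r.d.val % 2 := by omega
        have hP1 : (Dcnt y' r3 * (IcdD y' r.c.val r.d.val + 1)) % 2
            = (Dcnt y' r3 * (IcdD x r.c.val r.d.val + 1)) % 2 :=
          Nat.ModEq.mul_left _ (Nat.ModEq.add_right 1 hmm')
        have hP2 : Dcnt y' r3 * (IcdD x r.c.val r.d.val + 1) + (IcdD x r.c.val r.d.val + 1)
            = Dcnt x r * (IcdD x r.c.val r.d.val + 1) := by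
          rw [hDB]; ring
        rw [hsolve, hSp, hSt, hIH3, mul_neg, ← pow_add, ← pow_add, neg_pow_units]
        exact units_pow_parity (by omega)
      · -- CASE A : the point in column a+1 is above the rectangle
        set r1 : GRect n := ⟨((r.a, A1), (r.d, e)), ⟨hAA1, Ne.symm heD⟩⟩ with hr1def
        set r2 : GRect n := ⟨((r.a, A1), (r.c, e)), ⟨hAA1, Ne.symm heC⟩⟩ with hr2def
        set y : Equiv.Perm (ZMod n) := x * Equiv.swap r.a r.b with hydef
        have hnextr : next x r = y := rfl
        have hyA : y r.a = r.d := by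
          rw [hydef, Equiv.Perm.mul_apply, Equiv.swap_apply_left, hxb]
        have hyA1 : y A1 = e := by
          rw [hydef, Equiv.Perm.mul_apply,
            Equiv.swap_apply_of_ne_of_ne (Ne.symm hAA1) hA1B]
        have hHit1 : Hits (next x r) r1 := by
          rw [hnextr]; exact ⟨hyA, hyA1, empt_of_thin hn2 y r1 hA1def⟩
        have hHit2 : Hits x r2 := ⟨hxa, hedef.symm, empt_of_thin hn2 x r2 hA1def⟩
        have hnext2 : next x r2 = y' := rfl
        have hHit3' : Hits (next x r2) r3 := by rw [hnext2]; exact hHit3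
        have hne : (r, r1) ≠ (r2, r3) := fun h => by
          have h1 := congrArg (fun t : GRect n × GRect n => t.1.b.val) h
          have h1' : r.b.val = A1.val := h1
          omega
        have hcells : ∀ t : ZMod n × ZMod n,
            cellsOf r t + cellsOf r1 t = cellsOf r2 t + cellsOf r3 t := by
          intro t
          have c0 := cellIn_iff hab hcd t.1 t.2
          have c1 : CellIn r1 t.1 t.2 ↔ ((r.a.val ≤ t.1.val ∧ t.1.val < A1.val) ∧
              (r.d.val ≤ t.2.val ∧ t.2.val < e.val)) :=
            cellIn_iff (by show r.a.val < A1.val; omega)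
              (by show r.d.val < e.val; omega) t.1 t.2
          have c2 : CellIn r2 t.1 t.2 ↔ ((r.a.val ≤ t.1.val ∧ t.1.val < A1.val) ∧
              (r.c.val ≤ t.2.val ∧ t.2.val < e.val)) :=
            cellIn_iff (by show r.a.val < A1.val; omega)
              (by show r.c.val < e.val; omega) t.1 t.2
          have c3 : CellIn r3 t.1 t.2 ↔ ((A1.val ≤ t.1.val ∧ t.1.val < r.b.val) ∧
              (r.c.val ≤ t.2.val ∧ t.2.val < r.d.val)) :=
            cellIn_iff hab3 hcd3 t.1 t.2
          simp only [cellsOf, c0, c1, c2, c3]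
          split_ifs <;> omega
        have hfinal : next (next x r) r1 = next (next x r2) r3 := by
          rw [hnextr, hnext2]
          show y * Equiv.swap r.a A1 = y' * Equiv.swap A1 r.b
          rw [hydef, hy'def, mul_assoc, mul_assoc]
          congr 1
          rw [← swap_sandwich hA1B hAB, mul_assoc, Equiv.swap_mul_self, mul_one]
        have hsq := hSq x r r1 r2 r3 ⟨hxa, hxb, hE⟩ hHit1 hHit2 hHit3' hne hcells hfinal
        rw [hnextr, hnext2] at hsq
        have hsolve : S x r = -(S x r2 * S y' r3) * S y r1 := by
          rw [← hsq, mul_assoc, Int.units_mul_self, mul_one]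
        have hS1 : S y r1 = (-1) ^ IleD y e.val := by
          have h' : Hits y r1 := by rw [← hnextr]; exact hHit1
          have helt := ZMod.val_lt e
          exact hthin y r1 h' (by show A1.val = r.a.val + 1; omega)
            (by show A1.val ≤ n - 1; omega) (by show r.d.val < e.val; omega)
            (by show e.val ≤ n - 1; omega)
        have hS2 : S x r2 = (-1) ^ IleD x e.val := by
          have helt := ZMod.val_lt e
          exact hthin x r2 hHit2 (by show A1.val = r.a.val + 1; omega)
            (by show A1.val ≤ n - 1; omega) (by show r.c.val < e.val; omega)
            (by show e.val ≤ n - 1; omega)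
        have hye : IleD y e.val % 2 = (IleD x e.val + 1) % 2 :=
          IleD_swap_flip (r.b.val - r.a.val) x r.a r.b e.val le_rfl hab
            (by rw [hxa]; omega) (by rw [hxb]; omega)
        have hyd : IleD y' r.d.val = IleD x r.d.val :=
          IleD_swap_adj_eq x r.a A1 hA1 r.d.val (fun hc => by
            have hc2 := hc.2
            rw [← hedef] at hc2; omega)
        have hyc : IleD y' r.c.val = IleD x r.c.val :=
          IleD_swap_adj_eq x r.a A1 hA1 r.c.val (fun hc => by
            have hc2 := hc.2
            rw [← hedef] at hc2; omega)
        have hmeq : IcdD y' r.c.val r.d.val = IcdD x r.c.val r.d.val := by omega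
        have hDA : Dcnt x r = Dcnt y' r3 := by
          rw [Dcnt, Dcnt]
          congr 1
          ext i
          simp only [Finset.mem_filter, Finset.mem_univ, true_and, p3a, p3b, p3c]
          constructor
          · rintro ⟨h1, h2, h3⟩
            have hiA1 : i ≠ A1 := fun h => by
              rw [h, ← hedef] at h3; omega
            have hvA1i : i.val ≠ A1.val := fun h => hiA1 (zval_inj h)
            have hiA : i ≠ r.a := fun h => by have := congrArg ZMod.val h; omega
            rw [hy'i i hiA hiA1]
            exact ⟨by omega, h2, h3⟩
          · rintro ⟨h1, h2, h3⟩
            have hiA : i ≠ r.a := fun h => by have := congrArg ZMod.val h; omega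
            have hiA1 : i ≠ A1 := fun h => by have := congrArg ZMod.val h; omega
            rw [hy'i i hiA hiA1] at h3
            exact ⟨by omega, h2, h3⟩
        have hprod : Dcnt y' r3 * (IcdD y' r.c.val r.d.val + 1)
            = Dcnt x r * (IcdD x r.c.val r.d.val + 1) := by rw [hDA, hmeq]
        rw [hsolve, hS1, hS2, hIH3, hprod, neg_mul, ← pow_add, ← pow_add, neg_pow_units]
        exact units_pow_parity (by omega)
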